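/- arXiv:2103.15598 — 5 statements merged into one kernel-verified Lean document; each statement's English description precedes it below -/
import Mathlib

section
/- Let μ, L > 0 with μ ≤ L, and define sequences α⁰ = A⁰ = 0 and, for k ≥ 0, let α^{k+1} > 0 be the larger root of (A^k + α^{k+1})(1 + A^k μ) = L (α^{k+1})², with A^{k+1} = A^k + α^{k+1}. Then for every N ≥ 1, A^N ≥ (1/L)·(1 + (1/2)√(μ/L))^{2(N−1)}. -/
lemma step_aux (a b q : ℝ) (hb : 0 < b) (hab : b < a) (hq : 0 ≤ q)
    (h : q ^ 2 * (a * b) ≤ (a - b) ^ 2) : a ≥ b * (1 + q / 2) ^ 2 := by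
  set x := Real.sqrt a with hxdef
  set y := Real.sqrt b with hydef
  have ha : 0 < a := hb.trans hab
  have hx : x ^ 2 = a := Real.sq_sqrt ha.le
  have hy : y ^ 2 = b := Real.sq_sqrt hb.le
  have hx0 : 0 ≤ x := Real.sqrt_nonneg a
  have hy0 : 0 < y := Real.sqrt_pos.mpr hb
  have h1 : q * (x * y) ≤ a - b := by
    have h2 : (q * (x * y)) ^ 2 ≤ (a - b) ^ 2 := by
      have : (q * (x * y)) ^ 2 = q ^ 2 * (a * b) := by
        rw [mul_pow, mul_pow, hx, hy]
      linarith [h]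
    have h3 := Real.sqrt_le_sqrt h2
    rwa [Real.sqrt_sq (by positivity), Real.sqrt_sq (by linarith)] at h3
  have hxy : x ^ 2 - y ^ 2 ≥ q * (x * y) := by rw [hx, hy]; linarith
  have hxqy : x ≥ q * y := by nlinarith
  have key : x - q * y / 2 ≥ y := by
    have hsq : (x - q * y / 2) ^ 2 ≥ y ^ 2 := by nlinarith
    nlinarith [sq_nonneg (x - q * y / 2 - y)]
  calc a = x ^ 2 := hx.symm
    _ ≥ (y * (1 + q / 2)) ^ 2 := by
        have hxx : y * (1 + q / 2) ≤ x := by linarith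
        have hnn : (0:ℝ) ≤ y * (1 + q / 2) := by positivity
        exact pow_le_pow_left₀ hnn hxx 2
    _ = b * (1 + q / 2) ^ 2 := by rw [mul_pow, hy]

theorem stmt_6 (μ L : ℝ) (hμ : 0 < μ) (hμL : μ ≤ L)
    (α A : ℕ → ℝ) (hα0 : α 0 = 0) (hA0 : A 0 = 0)
    (hαpos : ∀ k, 0 < α (k + 1))
    (hrec : ∀ k, (A k + α (k + 1)) * (1 + A k * μ) = L * (α (k + 1)) ^ 2)
    (hAsucc : ∀ k, A (k + 1) = A k + α (k + 1)) :
    ∀ N : ℕ, 1 ≤ N →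
      A N ≥ (1 / L) * (1 + (1 / 2) * Real.sqrt (μ / L)) ^ (2 * (N - 1)) := by
  have hL : 0 < L := hμ.trans_le hμL
  set q := Real.sqrt (μ / L) with hqdef
  have hq0 : 0 ≤ q := Real.sqrt_nonneg _
  have hq2 : q ^ 2 = μ / L := Real.sq_sqrt (by positivity)
  have hA1 : A 1 = 1 / L := by
    have h0 := hrec 0
    rw [hA0] at h0
    have hα1 := hαpos 0
    have h2 : 1 = L * α 1 := by
      have h1 : α 1 = L * α 1 ^ 2 := by linarith [h0]
      nlinarith
    rw [hAsucc 0, hA0]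
    field_simp
    linarith
  have main : ∀ n : ℕ, A (n + 1) ≥ (1 / L) * (1 + q / 2) ^ (2 * n) := by
    intro n
    induction n with
    | zero => simp [hA1]
    | succ m ih =>
      have hbpos : 0 < A (m + 1) := lt_of_lt_of_le (by positivity) ih
      have hab : A (m + 1) < A (m + 2) := by
        rw [hAsucc (m + 1)]; linarith [hαpos (m + 1)]
      have hsq : q ^ 2 * (A (m + 2) * A (m + 1)) ≤ (A (m + 2) - A (m + 1)) ^ 2 := by
        have hr := hrec (m + 1)
        rw [show A (m + 1) + α (m + 2) = A (m + 2) from (hAsucc (m + 1)).symm,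
            show α (m + 2) = A (m + 2) - A (m + 1) by rw [hAsucc (m + 1)]; ring] at hr
        have hapos : 0 < A (m + 2) := hbpos.trans hab
        rw [hq2, div_mul_eq_mul_div, div_le_iff₀ hL]
        nlinarith
      have hstep := step_aux (A (m + 2)) (A (m + 1)) q hbpos hab hq0 hsq
      calc A (m + 2) ≥ A (m + 1) * (1 + q / 2) ^ 2 := hstep
        _ ≥ (1 / L) * (1 + q / 2) ^ (2 * m) * (1 + q / 2) ^ 2 := by
            have hp : (0:ℝ) < (1 + q / 2) ^ 2 := by positivity
            nlinarith
        _ = (1 / L) * (1 + q / 2) ^ (2 * (m + 1)) := by ring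
  intro N hN
  obtain ⟨n, rfl⟩ := Nat.exists_eq_add_of_le hN
  have h := main n
  have e : 1 + n - 1 = n := by omega
  rw [e]
  have e2 : 1 + n = n + 1 := by omega
  rw [e2]
  convert h using 3
  ring
end

section
/- Let μ, L > 0 with μ ≤ L, and define sequences α⁰ = A⁰ = 0 and, for k ≥ 0, α^{k+1} > 0 the larger root of (A^k + α^{k+1})(1 + A^k μ) = L (α^{k+1})², A^{k+1} = A^k + α^{k+1}. Then for every N ≥ 1, (∑_{i=1}^{N} A^i)/A^N ≤ 1 + √(L/μ). -/
theorem stmt_7 (μ L : ℝ) (hμ : 0 < μ) (hμL : μ ≤ L)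
    (α A : ℕ → ℝ) (hα0 : α 0 = 0) (hA0 : A 0 = 0)
    (hαpos : ∀ k, 0 < α (k + 1))
    (hrec : ∀ k, (A k + α (k + 1)) * (1 + A k * μ) = L * (α (k + 1)) ^ 2)
    (hAsucc : ∀ k, A (k + 1) = A k + α (k + 1)) :
    ∀ N : ℕ, 1 ≤ N →
      (∑ i ∈ Finset.Icc 1 N, A i) / A N ≤ 1 + Real.sqrt (L / μ) := by
  set κ := Real.sqrt (L / μ) with hκ
  have hLμ : 0 ≤ L / μ := div_nonneg (le_trans hμ.le hμL) hμ.le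
  have hκ0 : 0 ≤ κ := Real.sqrt_nonneg _
  -- A k ≥ 0, and A (k+1) > 0
  have hAnn : ∀ k, 0 ≤ A k := by
    intro k
    induction k with
    | zero => simp [hA0]
    | succ n ih =>
      rw [hAsucc n]
      exact add_nonneg ih (hαpos n).le
  have hApos : ∀ k, 0 < A (k + 1) := by
    intro k
    rw [hAsucc k]
    exact add_pos_of_nonneg_of_pos (hAnn k) (hαpos k)
  -- key: A k ≤ κ * α (k+1)
  have key : ∀ k, A k ≤ κ * α (k + 1) := by
    intro k
    have h1 : μ * (A k) ^ 2 ≤ L * (α (k + 1)) ^ 2 := by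
      rw [← hrec k]
      nlinarith [mul_nonneg (mul_nonneg (hαpos k).le (hAnn k)) hμ.le,
        hAnn k, (hαpos k).le]
    have h2 : (A k) ^ 2 ≤ (L / μ) * (α (k + 1)) ^ 2 := by
      rw [div_mul_eq_mul_div, le_div_iff₀ hμ]
      linarith
    calc A k = Real.sqrt ((A k) ^ 2) := (Real.sqrt_sq (hAnn k)).symm
      _ ≤ Real.sqrt ((L / μ) * (α (k + 1)) ^ 2) := Real.sqrt_le_sqrt h2
      _ = κ * α (k + 1) := by
          rw [Real.sqrt_mul hLμ, Real.sqrt_sq (hαpos k).le]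
  -- main induction
  have main : ∀ N : ℕ, (∑ i ∈ Finset.Icc 1 N, A i) ≤ (1 + κ) * A N := by
    intro N
    induction N with
    | zero => simp [hA0]
    | succ n ih =>
      rw [Finset.sum_Icc_succ_top (by omega : 1 ≤ n + 1)]
      have hk := key n
      have := hAsucc n
      nlinarith
  intro N hN
  have hAN : 0 < A N := by
    obtain ⟨m, rfl⟩ : ∃ m, N = m + 1 := ⟨N - 1, by omega⟩
    exact hApos m
  rw [div_le_iff₀ hAN]
  calc (∑ i ∈ Finset.Icc 1 N, A i) ≤ (1 + κ) * A N := main N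
    _ = (1 + κ) * A N := rfl
end

section
/- Let μ, L > 0, A ≥ 0, and let α > 0 be the larger root of L α² − (1 + Aμ) α − (1 + Aμ)A = 0, i.e. α = (1 + Aμ + √((1 + Aμ)² + 4LA(1 + Aμ)))/(2L). If μ ≤ L, then α/(1 + Aμ) ≤ 2/√(Lμ). -/
theorem stmt_8 (μ L A α : ℝ) (hμ : 0 < μ) (hμL : μ ≤ L) (hA : 0 ≤ A)
    (hα : α = (1 + A * μ + Real.sqrt ((1 + A * μ) ^ 2 + 4 * L * A * (1 + A * μ))) / (2 * L)) :
    α / (1 + A * μ) ≤ 2 / Real.sqrt (L * μ) := by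
  have hL : 0 < L := lt_of_lt_of_le hμ hμL
  have hs : (0:ℝ) < 1 + A * μ := by positivity
  set s := 1 + A * μ with hsdef
  set r := Real.sqrt (L / μ) with hrdef
  have hr1 : 1 ≤ r := by
    rw [hrdef, show (1:ℝ) = Real.sqrt 1 by simp]
    exact Real.sqrt_le_sqrt (by rw [le_div_iff₀ hμ]; linarith)
  have hr0 : 0 < r := lt_of_lt_of_le one_pos hr1
  have hr2 : r ^ 2 = L / μ := Real.sq_sqrt (by positivity)
  have hLμ : Real.sqrt (L * μ) = L / r := by
    rw [eq_div_iff hr0.ne', hrdef, ← Real.sqrt_mul (by positivity)]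
    rw [show L * μ * (L / μ) = L ^ 2 by field_simp]
    exact Real.sqrt_sq hL.le
  have hrL : L = r ^ 2 * μ := by rw [hr2]; field_simp
  have h1 : s ^ 2 + 4 * L * A * s ≤ ((4 * r - 1) * s) ^ 2 := by
    have hAs : A * μ ≤ s := by rw [hsdef]; linarith
    have h3 : 4 * L * A * s ≤ 4 * r ^ 2 * s ^ 2 := by
      rw [hrL]; nlinarith [mul_nonneg (sq_nonneg r) (mul_nonneg (sub_nonneg.2 hAs) hs.le)]
    have h4 : (0:ℝ) ≤ 12 * r ^ 2 - 8 * r := by nlinarith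
    nlinarith [mul_nonneg (mul_pos hs hs).le h4]
  have key : Real.sqrt (s ^ 2 + 4 * L * A * s) ≤ (4 * r - 1) * s :=
    (Real.sqrt_le_sqrt h1).trans_eq (Real.sqrt_sq (by nlinarith))
  have h2 : 2 / Real.sqrt (L * μ) = 2 * r / L := by
    rw [hLμ]; field_simp
  rw [h2, div_le_div_iff₀ hs hL, hα, div_mul_eq_mul_div,
    div_le_iff₀ (by positivity : (0:ℝ) < 2 * L)]
  nlinarith [key, mul_pos hr0 hs]
end

section
/- Let μ, L > 0. Define (B^k) by B⁰ = β⁰ = 1 and L + μ B^k = L(β^{k+1})²/B^{k+1} with B^{k+1} = B^k + β^{k+1}, β^{k+1} > 0; and define (A^k) by A⁰ = α⁰ = 0 and (A^k + α^{k+1})(1 + A^k μ) = L(α^{k+1})², A^{k+1} = A^k + α^{k+1}, α^{k+1} > 0. Then A^{k+1} = B^k / L for all k ≥ 0. -/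
theorem stmt_9 (μ L : ℝ) (hμ : 0 < μ) (hL : 0 < L)
    (α A β B : ℕ → ℝ)
    (hα0 : α 0 = 0) (hA0 : A 0 = 0)
    (hαpos : ∀ k, 0 < α (k + 1))
    (hrecA : ∀ k, (A k + α (k + 1)) * (1 + A k * μ) = L * (α (k + 1)) ^ 2)
    (hAsucc : ∀ k, A (k + 1) = A k + α (k + 1))
    (hβ0 : β 0 = 1) (hB0 : B 0 = 1)
    (hβpos : ∀ k, 0 < β (k + 1))
    (hrecB : ∀ k, L + μ * B k = L * (β (k + 1)) ^ 2 / B (k + 1))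
    (hBsucc : ∀ k, B (k + 1) = B k + β (k + 1)) :
    ∀ k : ℕ, A (k + 1) = B k / L := by
  have hBpos : ∀ k, 0 < B k := by
    intro k
    induction k with
    | zero => rw [hB0]; norm_num
    | succ n ih => rw [hBsucc]; linarith [hβpos n]
  intro k
  induction k with
  | zero =>
    have h := hrecA 0
    rw [hA0] at h
    have hα1 : 0 < α 1 := hαpos 0
    have : α 1 = 1 / L := by
      have h1 : α 1 = L * (α 1)^2 := by linarith [h]
      field_simp
      nlinarith [h1]
    rw [hAsucc 0, hA0, hB0, this]
    ring
  | succ n ih =>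
    have hx2 : α (n + 1 + 1) = α (n + 2) := rfl
    set x := α (n + 2) with hxdef
    set b := β (n + 1) with hbdef
    have hxpos : 0 < x := hαpos (n + 1)
    have hbpos : 0 < b := hβpos n
    have hBn : 0 < B n := hBpos n
    have hBn1 : B (n + 1) = B n + b := hBsucc n
    have hBn1pos : 0 < B (n + 1) := hBpos (n + 1)
    have hB' : (L + μ * B n) * (B n + b) = L * b ^ 2 := by
      have h := hrecB n
      rw [eq_div_iff (ne_of_gt hBn1pos)] at h
      rw [hBn1] at h
      linarith [h]
    have h1 : (B n + L * x) * (L + B n * μ) = L ^ 3 * x ^ 2 := by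
      have h := hrecA (n + 1)
      rw [ih] at h
      field_simp at h
      nlinarith [h]
    obtain ⟨y, hLy⟩ : ∃ y : ℝ, L * y = b := ⟨b / L, by field_simp⟩
    have hypos : 0 < y := by
      by_contra hcon
      push_neg at hcon
      nlinarith
    have h2 : (B n + L * y) * (L + B n * μ) = L ^ 3 * y ^ 2 := by
      linear_combination hB' + (L + B n * μ - L ^ 2 * y - L * b) * hLy
    have keyL : L * ((x - y) * (L ^ 2 * (x + y) - (L + B n * μ))) = 0 := by
      linear_combination h2 - h1
    have key : (x - y) * (L ^ 2 * (x + y) - (L + B n * μ)) = 0 := by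
      rcases mul_eq_zero.mp keyL with h | h
      · exact absurd h (ne_of_gt hL)
      · exact h
    have hxy : x = y := by
      rcases mul_eq_zero.mp key with h | h
      · linarith
      · exfalso
        have hc : L + B n * μ = L ^ 2 * (x + y) := by linarith
        have hz : L ^ 2 * (B n * x + B n * y + L * (x * y)) = 0 := by
          linear_combination h1 - (B n + L * x) * hc
        have hP : 0 < B n * x + B n * y + L * (x * y) := by
          nlinarith [mul_pos hBn hxpos, mul_pos hBn hypos,
            mul_pos hL (mul_pos hxpos hypos)]
        nlinarith [mul_pos (pow_pos hL 2) hP]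
    rw [hAsucc (n + 1), ih]
    show B n / L + x = B (n + 1) / L
    rw [hxy, hBn1, ← hLy]
    field_simp
end

section
/- Let f : ℝ^d → ℝ be μ-strongly convex and L-smooth, and suppose at x ∈ ℝ^d we have an inexact oracle (f_δ, g_δ) satisfying, for all y, (μ/2)‖y−x‖² ≤ f(y) − f_δ − ⟨g_δ, y−x⟩ ≤ (L/2)‖y−x‖² + δ. Then for the true gradient, ‖g_δ − ∇f(x)‖² ≤ 2Lδ. -/
/-!
Strong convexity makes `f` convex, so `f` lies above its tangent plane at `x`; together with the
oracle's upper bound and `fδ ≤ f x` (the lower bound at `y = x`) this gives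
`⟪∇f x - gδ, v⟫ ≤ L/2 ‖v‖² + δ` for every `v`. Taking `v = (∇f x - gδ) / L` yields the claim.
-/

open Set

theorem ConvexOn.hasFDerivAt_le_sub {E : Type*} [NormedAddCommGroup E] [NormedSpace ℝ E]
    {f : E → ℝ} {f' : E →L[ℝ] ℝ} {s : Set E} {x y : E} (hf : ConvexOn ℝ s f) (hx : x ∈ s)
    (hy : y ∈ s) (hf' : HasFDerivAt f f' x) : f' (y - x) ≤ f y - f x := by
  let ℓ : ℝ →ᵃ[ℝ] E := AffineMap.lineMap x y
  have hℓ : ⇑ℓ = fun t : ℝ => t • (y - x) + x := funext (AffineMap.lineMap_apply_module' x y)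
  have hconv : ConvexOn ℝ (ℓ ⁻¹' s) (f ∘ ℓ) := hf.comp_affineMap ℓ
  have hderiv : HasDerivAt (f ∘ ℓ) (f' (y - x)) 0 := by
    have hline : HasDerivAt ℓ (y - x) 0 := by
      rw [hℓ]
      simpa using ((hasDerivAt_id (0 : ℝ)).smul_const (y - x)).add_const x
    exact (by simpa [ℓ] using hf' : HasFDerivAt f f' (ℓ 0)).comp_hasDerivAt 0 hline
  have hslope := hconv.le_slope_of_hasDerivAt (x := 0) (y := 1) (by simpa [ℓ] using hx)
    (by simpa [ℓ] using hy) one_pos hderiv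
  simpa [slope_def_field, ℓ] using hslope

theorem ConvexOn.inner_le_sub_of_hasGradientAt {F : Type*} [NormedAddCommGroup F]
    [InnerProductSpace ℝ F] [CompleteSpace F] {f : F → ℝ} {s : Set F} {x y g : F}
    (hf : ConvexOn ℝ s f) (hx : x ∈ s) (hy : y ∈ s) (hg : HasGradientAt f g x) :
    inner ℝ g (y - x) ≤ f y - f x := by
  simpa [InnerProductSpace.toDual_apply_apply] using
    hf.hasFDerivAt_le_sub hx hy (hasGradientAt_iff_hasFDerivAt.mp hg)

theorem norm_sq_le_of_forall_inner_le {F : Type*} [NormedAddCommGroup F]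
    [InnerProductSpace ℝ F] {r : F} {L δ : ℝ} (hL : 0 < L)
    (h : ∀ v, inner ℝ r v ≤ L / 2 * ‖v‖ ^ 2 + δ) : ‖r‖ ^ 2 ≤ 2 * L * δ := by
  have hv := h (L⁻¹ • r)
  rw [inner_smul_right, real_inner_self_eq_norm_sq, norm_smul, Real.norm_of_nonneg (by positivity),
    mul_pow] at hv
  have hhalf : ‖r‖ ^ 2 / (2 * L) ≤ δ := by
    have : L⁻¹ * ‖r‖ ^ 2 - L / 2 * (L⁻¹ ^ 2 * ‖r‖ ^ 2) = ‖r‖ ^ 2 / (2 * L) := by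
      field_simp; ring
    linarith
  rwa [div_le_iff₀ (by positivity), mul_comm] at hhalf

theorem stmt_15_general {d : ℕ} (f : EuclideanSpace ℝ (Fin d) → ℝ)
    (gradf : EuclideanSpace ℝ (Fin d) → EuclideanSpace ℝ (Fin d))
    (hgrad : ∀ x, HasGradientAt f (gradf x) x)
    (μ L δ : ℝ) (hμ : 0 < μ) (hL : 0 < L)
    (hsc : ConvexOn ℝ Set.univ (fun x => f x - μ / 2 * ‖x‖ ^ 2))
    (x : EuclideanSpace ℝ (Fin d)) (fδ : ℝ) (gδ : EuclideanSpace ℝ (Fin d))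
    (horacle : ∀ y, μ / 2 * ‖y - x‖ ^ 2 ≤ f y - fδ - inner ℝ gδ (y - x) ∧
        f y - fδ - (inner ℝ gδ (y - x) : ℝ) ≤ L / 2 * ‖y - x‖ ^ 2 + δ) :
    ‖gδ - gradf x‖ ^ 2 ≤ 2 * L * δ := by
  have hconv : ConvexOn ℝ univ f :=
    ((strongConvexOn_iff_convex.mpr hsc).strictConvexOn hμ).convexOn
  have hfδ : fδ ≤ f x := by simpa using (horacle x).1
  rw [norm_sub_rev]
  refine norm_sq_le_of_forall_inner_le hL fun v => ?_
  have htangent := hconv.inner_le_sub_of_hasGradientAt (mem_univ x) (mem_univ (x + v)) (hgrad x)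
  have hupper := (horacle (x + v)).2
  rw [add_sub_cancel_left] at htangent hupper
  rw [inner_sub_left]
  linarith

theorem stmt_15 {d : ℕ} (f : EuclideanSpace ℝ (Fin d) → ℝ)
    (gradf : EuclideanSpace ℝ (Fin d) → EuclideanSpace ℝ (Fin d))
    (hgrad : ∀ x, HasGradientAt f (gradf x) x)
    (μ L δ : ℝ) (hμ : 0 < μ) (hL : 0 < L) (hδ : 0 ≤ δ)
    (hsc : ConvexOn ℝ Set.univ (fun x => f x - μ / 2 * ‖x‖ ^ 2))
    (hsmooth : ∀ x y, ‖gradf x - gradf y‖ ≤ L * ‖x - y‖)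
    (x : EuclideanSpace ℝ (Fin d)) (fδ : ℝ) (gδ : EuclideanSpace ℝ (Fin d))
    (horacle : ∀ y, μ / 2 * ‖y - x‖ ^ 2 ≤ f y - fδ - inner ℝ gδ (y - x) ∧
        f y - fδ - (inner ℝ gδ (y - x) : ℝ) ≤ L / 2 * ‖y - x‖ ^ 2 + δ) :
    ‖gδ - gradf x‖ ^ 2 ≤ 2 * L * δ :=
  stmt_15_general f gradf hgrad μ L δ hμ hL hsc x fδ gδ horacle
end
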